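/- arXiv:2306.01297 — 7 statements merged into one kernel-verified Lean document; each statement's English description precedes it below -/
import Mathlib

section
/- Let Λ⁺ be a positive semidefinite diagonal n×n real matrix, Λ⁻ a negative semidefinite diagonal m×m real matrix with |Λ⁻| = -Λ⁻, and R an m×n real matrix satisfying I - RᵀR ⪰ 0. If √|Λ⁻| w⁻ = R √Λ⁺ w⁺ (the homogeneous boundary condition), then (w⁺)ᵀ Λ⁺ w⁺ + (w⁻)ᵀ Λ⁻ w⁻ ≥ 0. -/
open Matrix

/-! With `u = √Λ⁺ w⁺`, the boundary condition turns the boundary term into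
`|u|² - |R u|² = uᵀ (I - Rᵀ R) u ≥ 0`. -/

theorem Matrix.dotProduct_mulVec_self_le_of_posSemidef_one_sub {m n : Type*} [Fintype m]
    [Fintype n] [DecidableEq n] (R : Matrix m n ℝ) (hR : (1 - Rᵀ * R).PosSemidef) (u : n → ℝ) :
    R *ᵥ u ⬝ᵥ R *ᵥ u ≤ u ⬝ᵥ u := by
  have h := hR.dotProduct_mulVec_nonneg u
  rw [sub_mulVec, dotProduct_sub, one_mulVec, ← mulVec_mulVec, dotProduct_mulVec,
    vecMul_transpose, star_trivial] at h
  exact sub_nonneg.mp h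

theorem sum_mul_sq_eq_dotProduct_sqrt_mul {n : Type*} [Fintype n] (l w : n → ℝ)
    (hl : ∀ i, 0 ≤ l i) :
    ∑ i, l i * w i ^ 2 = (fun i => √(l i) * w i) ⬝ᵥ (fun i => √(l i) * w i) := by
  refine Finset.sum_congr rfl fun i _ => ?_
  rw [mul_mul_mul_comm, Real.mul_self_sqrt (hl i), sq]

/-- Strong homogeneous nonlinear boundary conditions: if `√|Λ⁻| w⁻ = R √Λ⁺ w⁺`
and `I - Rᵀ R ⪰ 0`, then the boundary term `(w⁺)ᵀ Λ⁺ w⁺ + (w⁻)ᵀ Λ⁻ w⁻` is nonnegative. -/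
theorem stmt1 (n m : ℕ) (lp : Fin n → ℝ) (lm : Fin m → ℝ)
    (hlp : ∀ i, 0 ≤ lp i) (hlm : ∀ i, lm i ≤ 0)
    (R : Matrix (Fin m) (Fin n) ℝ)
    (hR : ((1 : Matrix (Fin n) (Fin n) ℝ) - Rᵀ * R).PosSemidef)
    (wp : Fin n → ℝ) (wm : Fin m → ℝ)
    (hbc : (fun i => Real.sqrt (-(lm i)) * wm i)
        = R.mulVec (fun i => Real.sqrt (lp i) * wp i)) :
    0 ≤ ∑ i, lp i * (wp i) ^ 2 + ∑ i, lm i * (wm i) ^ 2 := by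
  have hplus := sum_mul_sq_eq_dotProduct_sqrt_mul lp wp hlp
  have hminus := sum_mul_sq_eq_dotProduct_sqrt_mul (fun i => -lm i) wm
    fun i => neg_nonneg.mpr (hlm i)
  rw [hbc] at hminus
  have hcontr := R.dotProduct_mulVec_self_le_of_posSemidef_one_sub hR
    fun i => √(lp i) * wp i
  simp only [neg_mul, Finset.sum_neg_distrib] at hminus
  linarith
end

section
/- Let R be m×n with I - RᵀR positive definite, and S be m×k with I - SᵀS - (RᵀS)ᵀ(I - RᵀR)⁻¹(RᵀS) positive semidefinite. Then for all w⁺ ∈ ℝⁿ, G ∈ ℝᵏ, and diagonal matrices Λ⁺ ⪰ 0 (n×n), Λ⁻ ⪯ 0 (m×m), the strong inhomogeneous boundary condition √|Λ⁻| w⁻ = R √Λ⁺ w⁺ + S G implies the bound (w⁺)ᵀ Λ⁺ w⁺ + (w⁻)ᵀ Λ⁻ w⁻ ≥ -GᵀG. -/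
/-!
Put `x = √Λ⁺ w⁺`, so that the boundary condition reads `y = R x + S G` for `y = √|Λ⁻| w⁻` and the
boundary term is `x ⬝ x - y ⬝ y`. Expanding `y ⬝ y` gives
`x ⬝ x - y ⬝ y + G ⬝ G = xᵀ A x - 2 xᵀ B G + Gᵀ (I - SᵀS) G` with `A = I - RᵀR ≻ 0`, `B = RᵀS`.
Completing the square in `x` bounds the first two terms below by `-Gᵀ Bᵀ A⁻¹ B G`, and what is
left is the quadratic form of the positive semidefinite matrix of the `S`-condition.
-/

open Matrix

namespace Matrix

variable {ι κ μ : Type*} [Fintype ι] [Fintype κ] [Fintype μ]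

theorem dotProduct_transpose_mul_mulVec {α : Type*} [CommSemiring α] (A : Matrix μ ι α)
    (B : Matrix μ κ α) (v : ι → α) (w : κ → α) :
    v ⬝ᵥ (Aᵀ * B) *ᵥ w = A *ᵥ v ⬝ᵥ B *ᵥ w := by
  rw [← mulVec_mulVec, dotProduct_transpose_mulVec, dotProduct_comm]

theorem PosDef.neg_dotProduct_inv_mulVec_le [DecidableEq ι] {A : Matrix ι ι ℝ} (hA : A.PosDef)
    (x b : ι → ℝ) : -(b ⬝ᵥ A⁻¹ *ᵥ b) ≤ x ⬝ᵥ A *ᵥ x - 2 * (x ⬝ᵥ b) := by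
  set u := A⁻¹ *ᵥ b
  have hAu : A *ᵥ u = b := by
    rw [mulVec_mulVec, mul_nonsing_inv A ((isUnit_iff_isUnit_det A).mp hA.isUnit), one_mulVec]
  have hAT : Aᵀ = A := by simpa using hA.isHermitian.eq
  have hsymm : u ⬝ᵥ A *ᵥ x = x ⬝ᵥ b := by
    rw [← hAu, ← dotProduct_transpose_mulVec, hAT]
  have hsquare : 0 ≤ (x - u) ⬝ᵥ A *ᵥ (x - u) := by
    simpa using hA.posSemidef.dotProduct_mulVec_nonneg (x - u)
  rw [mulVec_sub, sub_dotProduct, dotProduct_sub, dotProduct_sub, hAu, hsymm] at hsquare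
  linarith [dotProduct_comm u b]

theorem dotProduct_self_sub_add_dotProduct_self [DecidableEq ι] [DecidableEq κ] (R : Matrix μ ι ℝ) (S : Matrix μ κ ℝ)
    (x : ι → ℝ) (G : κ → ℝ) :
    x ⬝ᵥ x - (R *ᵥ x + S *ᵥ G) ⬝ᵥ (R *ᵥ x + S *ᵥ G) + G ⬝ᵥ G
      = x ⬝ᵥ (1 - Rᵀ * R) *ᵥ x - 2 * (x ⬝ᵥ (Rᵀ * S) *ᵥ G) + G ⬝ᵥ (1 - Sᵀ * S) *ᵥ G := by
  simp only [sub_mulVec, one_mulVec, dotProduct_sub, dotProduct_transpose_mul_mulVec,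
    add_dotProduct, dotProduct_add, dotProduct_comm (S *ᵥ G) (R *ᵥ x)]
  ring

end Matrix

theorem sum_mul_sq_eq_dotProduct_sqrt {ι : Type*} [Fintype ι] {l : ι → ℝ} (hl : ∀ i, 0 ≤ l i)
    (w : ι → ℝ) :
    ∑ i, l i * w i ^ 2 = (fun i => √(l i) * w i) ⬝ᵥ (fun i => √(l i) * w i) := by
  refine Finset.sum_congr rfl fun i _ => ?_
  rw [mul_mul_mul_comm, Real.mul_self_sqrt (hl i), sq]

/-- Strong inhomogeneous boundary conditions: if `I - RᵀR ≻ 0` and the `S`-condition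
holds, then the boundary term is bounded below by `-GᵀG`. -/
theorem stmt4 (n m k : ℕ) (lp : Fin n → ℝ) (lm : Fin m → ℝ)
    (hlp : ∀ i, 0 ≤ lp i) (hlm : ∀ i, lm i ≤ 0)
    (R : Matrix (Fin m) (Fin n) ℝ) (S : Matrix (Fin m) (Fin k) ℝ)
    (hR : ((1 : Matrix (Fin n) (Fin n) ℝ) - Rᵀ * R).PosDef)
    (hS : ((1 : Matrix (Fin k) (Fin k) ℝ) - Sᵀ * S
        - (Rᵀ * S)ᵀ * (1 - Rᵀ * R)⁻¹ * (Rᵀ * S)).PosSemidef)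
    (wp : Fin n → ℝ) (wm : Fin m → ℝ) (G : Fin k → ℝ)
    (hbc : (fun i => Real.sqrt (-(lm i)) * wm i)
        = R.mulVec (fun i => Real.sqrt (lp i) * wp i) + S.mulVec G) :
    -(G ⬝ᵥ G) ≤ ∑ i, lp i * (wp i) ^ 2 + ∑ i, lm i * (wm i) ^ 2 := by
  set x : Fin n → ℝ := fun i => √(lp i) * wp i
  have hplus : ∑ i, lp i * wp i ^ 2 = x ⬝ᵥ x := sum_mul_sq_eq_dotProduct_sqrt hlp wp
  have hminus : ∑ i, lm i * wm i ^ 2 = -((R *ᵥ x + S *ᵥ G) ⬝ᵥ (R *ᵥ x + S *ᵥ G)) := by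
    rw [← hbc, ← sum_mul_sq_eq_dotProduct_sqrt (fun i => neg_nonneg.2 (hlm i)) wm,
      ← Finset.sum_neg_distrib]
    simp only [neg_mul, neg_neg]
  have hsquare := hR.neg_dotProduct_inv_mulVec_le x ((Rᵀ * S) *ᵥ G)
  have hSform := hS.dotProduct_mulVec_nonneg G
  rw [star_trivial, Matrix.mul_assoc, sub_mulVec, dotProduct_sub, dotProduct_transpose_mul_mulVec,
    ← mulVec_mulVec G (1 - Rᵀ * R)⁻¹] at hSform
  have hexpand := dotProduct_self_sub_add_dotProduct_self R S x G
  rw [hplus, hminus]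
  linarith
end

section
/- Let Λ⁺ ⪰ 0 diagonal n×n, Λ⁻ ⪯ 0 diagonal m×m, R an m×n matrix with I - RᵀR ⪰ 0. Then for all w⁺ ∈ ℝⁿ, w⁻ ∈ ℝᵐ (no boundary condition imposed), the weak homogeneous boundary term (w⁺)ᵀΛ⁺w⁺ + (w⁻)ᵀΛ⁻w⁻ + 2(w⁻)ᵀ√|Λ⁻|(√|Λ⁻| w⁻ - R√Λ⁺ w⁺) is nonnegative. -/
open Matrix

/-!
Put `a = √Λ⁺ w⁺` and `c = √|Λ⁻| w⁻`. The boundary term becomes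
`‖a‖² - ‖c‖² + 2 c ⬝ (c - R a) = (‖a‖² - ‖R a‖²) + ‖c - R a‖²`,
and `I - RᵀR ⪰ 0` says exactly that `R` does not increase the Euclidean norm.
-/

theorem Matrix.PosSemidef.dotProduct_mulVec_self_le {ι κ : Type*}
    [Fintype ι] [DecidableEq ι] [Fintype κ] {R : Matrix κ ι ℝ}
    (hR : (1 - Rᵀ * R).PosSemidef) (a : ι → ℝ) :
    R *ᵥ a ⬝ᵥ R *ᵥ a ≤ a ⬝ᵥ a := by
  have h := hR.dotProduct_mulVec_nonneg a
  rw [star_trivial, sub_mulVec, dotProduct_sub, one_mulVec, ← mulVec_mulVec,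
    dotProduct_mulVec, vecMul_transpose] at h
  linarith

theorem weak_boundary_term_nonneg {ι κ : Type*}
    [Fintype ι] [DecidableEq ι] [Fintype κ] {R : Matrix κ ι ℝ}
    (hR : (1 - Rᵀ * R).PosSemidef) (a : ι → ℝ) (c : κ → ℝ) :
    0 ≤ a ⬝ᵥ a - c ⬝ᵥ c + 2 * (c ⬝ᵥ (c - R *ᵥ a)) := by
  have hsq : 0 ≤ (c - R *ᵥ a) ⬝ᵥ (c - R *ᵥ a) :=
    Finset.sum_nonneg fun i _ => mul_self_nonneg _
  have hcomm : R *ᵥ a ⬝ᵥ c = c ⬝ᵥ R *ᵥ a := dotProduct_comm _ _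
  simp only [dotProduct_sub, sub_dotProduct] at hsq ⊢
  linarith [hR.dotProduct_mulVec_self_le a]

/-- Weak homogeneous boundary conditions with penalty `Σ = √|Λ⁻|`: for all `w⁺, w⁻`
the weak boundary term is nonnegative when `I - RᵀR ⪰ 0`. -/
theorem stmt6 (n m : ℕ) (lp : Fin n → ℝ) (lm : Fin m → ℝ)
    (hlp : ∀ i, 0 ≤ lp i) (hlm : ∀ i, lm i ≤ 0)
    (R : Matrix (Fin m) (Fin n) ℝ)
    (hR : ((1 : Matrix (Fin n) (Fin n) ℝ) - Rᵀ * R).PosSemidef)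
    (wp : Fin n → ℝ) (wm : Fin m → ℝ) :
    0 ≤ ∑ i, lp i * (wp i) ^ 2 + ∑ i, lm i * (wm i) ^ 2 +
      2 * ∑ i, wm i * Real.sqrt (-(lm i)) *
        (Real.sqrt (-(lm i)) * wm i
          - (R.mulVec (fun j => Real.sqrt (lp j) * wp j)) i) := by
  set a : Fin n → ℝ := fun j => Real.sqrt (lp j) * wp j
  set c : Fin m → ℝ := fun i => Real.sqrt (-(lm i)) * wm i
  have hplus : ∑ i, lp i * wp i ^ 2 = a ⬝ᵥ a := by
    refine Finset.sum_congr rfl fun i _ => ?_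
    have := Real.sq_sqrt (hlp i)
    simp only [a]; linear_combination -(wp i) ^ 2 * this
  have hminus : ∑ i, lm i * wm i ^ 2 = -(c ⬝ᵥ c) := by
    rw [dotProduct, ← Finset.sum_neg_distrib]
    refine Finset.sum_congr rfl fun i _ => ?_
    have := Real.sq_sqrt (neg_nonneg.mpr (hlm i))
    simp only [c]; linear_combination (wm i) ^ 2 * this
  have hpenalty :
      ∑ i, wm i * √(-lm i) * (√(-lm i) * wm i - (R *ᵥ a) i) = c ⬝ᵥ (c - R *ᵥ a) :=
    Finset.sum_congr rfl fun i _ => by simp only [c, Pi.sub_apply]; ring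
  rw [hplus, hminus, hpenalty, ← sub_eq_add_neg]
  exact weak_boundary_term_nonneg hR a c
end

section
/- With the notation above, the weak homogeneous boundary term satisfies the identity (w⁺)ᵀΛ⁺w⁺ + (w⁻)ᵀΛ⁻w⁻ + 2(w⁻)ᵀ√|Λ⁻|(√|Λ⁻|w⁻ - R√Λ⁺w⁺) = (√Λ⁺w⁺)ᵀ(I - RᵀR)(√Λ⁺w⁺) + ‖√|Λ⁻|w⁻ - R√Λ⁺w⁺‖². -/
open Matrix

/-- Completing-the-square identity for the weak homogeneous boundary term:
`BT = (√Λ⁺w⁺)ᵀ(I - RᵀR)(√Λ⁺w⁺) + ‖√|Λ⁻|w⁻ - R√Λ⁺w⁺‖²`. -/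
theorem stmt7 (n m : ℕ) (lp : Fin n → ℝ) (lm : Fin m → ℝ)
    (hlp : ∀ i, 0 ≤ lp i) (hlm : ∀ i, lm i ≤ 0)
    (R : Matrix (Fin m) (Fin n) ℝ)
    (wp : Fin n → ℝ) (wm : Fin m → ℝ) :
    ∑ i, lp i * (wp i) ^ 2 + ∑ i, lm i * (wm i) ^ 2 +
      2 * ∑ i, wm i * Real.sqrt (-(lm i)) *
        (Real.sqrt (-(lm i)) * wm i
          - (R.mulVec (fun j => Real.sqrt (lp j) * wp j)) i) =
    (fun j => Real.sqrt (lp j) * wp j) ⬝ᵥ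
      ((1 - Rᵀ * R).mulVec (fun j => Real.sqrt (lp j) * wp j)) +
    ∑ i, (Real.sqrt (-(lm i)) * wm i
          - (R.mulVec (fun j => Real.sqrt (lp j) * wp j)) i) ^ 2 := by
  set v : Fin n → ℝ := fun j => Real.sqrt (lp j) * wp j with hv
  set a : Fin m → ℝ := R.mulVec v with ha
  have hv2 : ∀ j, lp j * wp j ^ 2 = v j ^ 2 := by
    intro j
    simp only [hv, mul_pow, Real.sq_sqrt (hlp j)]
  have hu2 : ∀ i, lm i * wm i ^ 2 = -(Real.sqrt (-(lm i)) * wm i) ^ 2 := by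
    intro i
    rw [mul_pow, Real.sq_sqrt (by linarith [hlm i])]
    ring
  have key : v ⬝ᵥ ((1 - Rᵀ * R).mulVec v) = ∑ j, v j ^ 2 - ∑ i, a i ^ 2 := by
    rw [sub_mulVec, dotProduct_sub, one_mulVec, ← mulVec_mulVec,
      dotProduct_mulVec, ← transpose_transpose R, ← vecMul_transpose,
      transpose_transpose]
    simp [dotProduct, sq, vecMul_transpose, ha]
  rw [key]
  simp only [Finset.sum_congr rfl (fun j _ => hv2 j),
    Finset.sum_congr rfl (fun i _ => hu2 i)]
  have hsum : ∑ i, (-(Real.sqrt (-(lm i)) * wm i) ^ 2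
      + 2 * (wm i * Real.sqrt (-(lm i)) * (Real.sqrt (-(lm i)) * wm i - a i))
      + a i ^ 2 - (Real.sqrt (-(lm i)) * wm i - a i) ^ 2) = 0 := by
    apply Finset.sum_eq_zero
    intro i _
    ring
  simp only [Finset.sum_add_distrib, Finset.sum_sub_distrib, ← Finset.mul_sum] at hsum
  linarith
end

section
/- Let Λ⁺ ⪰ 0 diagonal n×n, Λ⁻ ⪯ 0 diagonal m×m, R m×n, S m×k, G ∈ ℝᵏ. Then the weak inhomogeneous boundary term (w⁺)ᵀΛ⁺w⁺ + (w⁻)ᵀΛ⁻w⁻ + 2(√|Λ⁻|w⁻)ᵀ(√|Λ⁻|w⁻ - R√Λ⁺w⁺ - SG) equals ‖√|Λ⁻|w⁻ - R√Λ⁺w⁺ - SG‖² + vᵀMv - GᵀG, where v = (√Λ⁺w⁺, G) and M = [[I-RᵀR, -RᵀS],[-SᵀR, I-SᵀS]]. -/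
open Matrix

/-- Weak inhomogeneous boundary term identity: it equals the strong inhomogeneous
expression `vᵀMv - GᵀG` plus the nonnegative square `‖√|Λ⁻|w⁻ - R√Λ⁺w⁺ - SG‖²`. -/
theorem stmt8 (n m k : ℕ) (lp : Fin n → ℝ) (lm : Fin m → ℝ)
    (hlp : ∀ i, 0 ≤ lp i) (hlm : ∀ i, lm i ≤ 0)
    (R : Matrix (Fin m) (Fin n) ℝ) (S : Matrix (Fin m) (Fin k) ℝ)
    (G : Fin k → ℝ) (wp : Fin n → ℝ) (wm : Fin m → ℝ) :
    ∑ i, lp i * (wp i) ^ 2 + ∑ i, lm i * (wm i) ^ 2 +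
      2 * ∑ i, (Real.sqrt (-(lm i)) * wm i) *
        (Real.sqrt (-(lm i)) * wm i
          - (R.mulVec (fun j => Real.sqrt (lp j) * wp j)) i - (S.mulVec G) i) =
    ∑ i, (Real.sqrt (-(lm i)) * wm i
          - (R.mulVec (fun j => Real.sqrt (lp j) * wp j)) i - (S.mulVec G) i) ^ 2 +
    (Sum.elim (fun j => Real.sqrt (lp j) * wp j) G) ⬝ᵥ
      (Matrix.fromBlocks (1 - Rᵀ * R) (-(Rᵀ * S)) (-(Sᵀ * R)) (1 - Sᵀ * S)).mulVec
        (Sum.elim (fun j => Real.sqrt (lp j) * wp j) G)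
    - G ⬝ᵥ G := by
  set p : Fin n → ℝ := fun j => Real.sqrt (lp j) * wp j with hp
  set a : Fin m → ℝ := fun i => Real.sqrt (-(lm i)) * wm i with ha
  set q : Fin m → ℝ := R.mulVec p with hq
  set s : Fin m → ℝ := S.mulVec G with hs
  have h1 : ∑ i, lp i * (wp i) ^ 2 = p ⬝ᵥ p := by
    apply Finset.sum_congr rfl
    intro i _
    have : Real.sqrt (lp i) * Real.sqrt (lp i) = lp i := Real.mul_self_sqrt (hlp i)
    simp only [hp, dotProduct]
    ring_nf
    rw [Real.sq_sqrt (hlp i)]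
    ring
  have h2 : ∑ i, lm i * (wm i) ^ 2 = -(a ⬝ᵥ a) := by
    simp only [dotProduct, ← Finset.sum_neg_distrib]
    apply Finset.sum_congr rfl
    intro i _
    simp only [ha]
    ring_nf
    rw [Real.sq_sqrt (by linarith [hlm i])]
    ring
  have h3 : ∑ i, a i * (a i - q i - s i) = a ⬝ᵥ a - a ⬝ᵥ q - a ⬝ᵥ s := by
    simp only [dotProduct, ← Finset.sum_sub_distrib]
    apply Finset.sum_congr rfl; intro i _; ring
  have h4 : ∑ i, (a i - q i - s i) ^ 2
      = a ⬝ᵥ a + q ⬝ᵥ q + s ⬝ᵥ s - 2 * (a ⬝ᵥ q) - 2 * (a ⬝ᵥ s) + 2 * (q ⬝ᵥ s) := by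
    simp only [dotProduct, Finset.mul_sum, ← Finset.sum_add_distrib,
      ← Finset.sum_sub_distrib]
    apply Finset.sum_congr rfl; intro i _; ring
  have h5 : (Sum.elim p G) ⬝ᵥ
      (Matrix.fromBlocks (1 - Rᵀ * R) (-(Rᵀ * S)) (-(Sᵀ * R)) (1 - Sᵀ * S)).mulVec
        (Sum.elim p G)
      = p ⬝ᵥ p + G ⬝ᵥ G - q ⬝ᵥ q - 2 * (q ⬝ᵥ s) - s ⬝ᵥ s := by
    rw [fromBlocks_mulVec, sumElim_dotProduct_sumElim]
    simp only [sub_mulVec, one_mulVec, neg_mulVec, ← mulVec_mulVec,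
      dotProduct_add, dotProduct_sub, dotProduct_neg, dotProduct_mulVec (A := Rᵀ),
      dotProduct_mulVec (A := Sᵀ), vecMul_transpose, Sum.elim_comp_inl,
      Sum.elim_comp_inr, ← hq, ← hs]
    have : s ⬝ᵥ q = q ⬝ᵥ s := dotProduct_comm s q
    linarith
  rw [h1, h2, h3, h4, h5]
  ring
end

section
/- For the 2D shallow water equations in variables (U₁, Uₙ, U_τ) with U₁ > 0 and Uₙ ≠ 0, the boundary quadratic form uₙ U₁² + (uₙ/2) Uₙ² + (uₙ/2) U_τ², where uₙ = Uₙ/√U₁, equals -(1/(2Uₙ√U₁)) W₁² + (1/(2Uₙ√U₁)) W₂² + (1/(2Uₙ√U₁)) W₃² with W₁ = U₁², W₂ = U₁² + Uₙ², W₃ = Uₙ U_τ. -/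
/-- Shallow water boundary term identity: the boundary quadratic form
`uₙU₁² + (uₙ/2)Uₙ² + (uₙ/2)U_τ²` with `uₙ = Uₙ/√U₁` equals
`-(1/(2Uₙ√U₁))W₁² + (1/(2Uₙ√U₁))W₂² + (1/(2Uₙ√U₁))W₃²` with
`W₁ = U₁²`, `W₂ = U₁² + Uₙ²`, `W₃ = UₙU_τ`. -/
theorem stmt11 (U₁ Un Uτ : ℝ) (hU₁ : 0 < U₁) (hUn : Un ≠ 0) :
    (Un / Real.sqrt U₁) * U₁ ^ 2 + ((Un / Real.sqrt U₁) / 2) * Un ^ 2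
      + ((Un / Real.sqrt U₁) / 2) * Uτ ^ 2 =
    -(1 / (2 * Un * Real.sqrt U₁)) * (U₁ ^ 2) ^ 2
      + (1 / (2 * Un * Real.sqrt U₁)) * (U₁ ^ 2 + Un ^ 2) ^ 2
      + (1 / (2 * Un * Real.sqrt U₁)) * (Un * Uτ) ^ 2 := by
  have hs : Real.sqrt U₁ ≠ 0 := ne_of_gt (Real.sqrt_pos.mpr hU₁)
  field_simp
  ring
end

section
/- For the skew-symmetric compressible Euler formulation, the contraction identity Φᵀ(n₁A + n₂B)Φ = uₙ(φ₁² + ((γ-1)/2)(φ₂² + φ₃²) + γφ₄²) holds, where Φ_r = (φ₁,φ₂,φ₃,φ₄) = (√ρ, √ρ uₙ, √ρ u_τ, √p), i.e. the symmetric boundary matrix [[uₙ,0,0,0],[0,((γ-1)/2)uₙ,0,(γ-1)φ₄/φ₁],[0,0,((γ-1)/2)uₙ,0],[0,(γ-1)φ₄/φ₁,0,(2-γ)uₙ]] contracted with Φ_r equals Φ_rᵀ diag(uₙ, ((γ-1)/2)uₙ, ((γ-1)/2)uₙ, γuₙ) Φ_r, using the relations φ₂ = φ₁ uₙ. -/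
open Matrix

/-- Compressible Euler contraction identity: the symmetric boundary matrix contracted
with `Φ_r = (φ₁, φ₂, φ₃, φ₄)` equals `uₙ(φ₁² + ((γ-1)/2)(φ₂² + φ₃²) + γφ₄²)`,
using `φ₂ = φ₁ uₙ`. -/
theorem stmt13 (γ un φ₁ φ₂ φ₃ φ₄ : ℝ) (hφ₁ : 0 < φ₁) (hφ₄ : 0 < φ₄)
    (hrel : φ₂ = φ₁ * un) :
    ![φ₁, φ₂, φ₃, φ₄] ⬝ᵥ
      (!![un, 0, 0, 0;
          0, ((γ - 1) / 2) * un, 0, (γ - 1) * (φ₄ / φ₁);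
          0, 0, ((γ - 1) / 2) * un, 0;
          0, (γ - 1) * (φ₄ / φ₁), 0, (2 - γ) * un]).mulVec ![φ₁, φ₂, φ₃, φ₄]
    = un * (φ₁ ^ 2 + ((γ - 1) / 2) * (φ₂ ^ 2 + φ₃ ^ 2) + γ * φ₄ ^ 2) := by
  subst hrel
  simp [dotProduct, Matrix.mulVec, Fin.sum_univ_four, Matrix.vecHead, Matrix.vecTail]
  field_simp
  ring
end
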